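/- Let d ≥ 1, Ω ∈ ℝ, H : ℝᵈ → ℝ continuously differentiable, and K⁻¹ : ℝᵈ → Matrix (Fin d) (Fin d) ℝ continuous, and assume the extended vector field F : (ℝᵈ)ᵈ → (ℝᵈ)ᵈ, F(P₁,…,P_d)_k = K⁻¹(P_k)·∇_{P_k} H̄(P₁,…,P_d), is Lipschitz continuous, where H̄ = Σ_{i=1}^d H_i + Ω·H_c is the augmented Hamiltonian built from the cyclic mixed Hamiltonians H_i and the constraint H_c = Σ_{1≤i<j≤d} ‖P_i - P_j‖²/2. Let P : [0,T] → ℝᵈ solve P' = K⁻¹(P)∇H(P) with P(0) = P₀, and let (P₁,…,P_d) : [0,T] → (ℝᵈ)ᵈ solve the extended system with P_k(0) = P₀ for every k. Then P_k(t) = P(t) for all k ∈ {1,…,d} and all t ∈ [0,T]. -/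

import Mathlib

/-!
On the diagonal `P₁ = ⋯ = P_d = z` the constraint `H_c` attains its minimum `0`, so its gradient
vanishes there; and since each mixed Hamiltonian `H_i` reads exactly one coordinate from each copy,
the block-`k` gradient of `Σ_i H_i` at the diagonal point is `∇H(z)`. Hence the diagonal lift
`t ↦ (P(t), …, P(t))` of the original solution solves the extended system with the same initial
value, and uniqueness of solutions of a Lipschitz ODE identifies it with `(P₁, …, P_d)`.
-/

open Matrix
open scoped BigOperators

/-- The i-th mixed Hamiltonian H_i(P₁,…,P_d) := H(x₁,…,x_d) where x_j := p_{σ(i,j),j}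
and σ(i,j) is the unique index congruent to d + j - i modulo d (in 0-based indexing on
`Fin d` this is just j - i computed modulo d). -/
noncomputable def mixedHam (d : ℕ) (H : (Fin d → ℝ) → ℝ)
    (i : Fin d) (Z : Fin d → Fin d → ℝ) : ℝ :=
  H (fun j => Z (j - i) j)

/-- The constraint H_c := Σ_{i<j} ‖P_i - P_j‖₂²/2 (Euclidean 2-norm). -/
noncomputable def constraintHam (d : ℕ) (Z : Fin d → Fin d → ℝ) : ℝ :=
  ∑ i : Fin d, ∑ j : Fin d,
    if i < j then (∑ l : Fin d, (Z i l - Z j l) ^ 2) / 2 else 0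

/-- The augmented Hamiltonian H̄ := Σ_i H_i + Ω·H_c. -/
noncomputable def augHam (d : ℕ) (Ω : ℝ) (H : (Fin d → ℝ) → ℝ)
    (Z : Fin d → Fin d → ℝ) : ℝ :=
  (∑ i : Fin d, mixedHam d H i Z) + Ω * constraintHam d Z

/-- Gradient of H, expressed coordinatewise via partial derivatives. -/
noncomputable def gradVec (d : ℕ) (H : (Fin d → ℝ) → ℝ) (z : Fin d → ℝ) : Fin d → ℝ :=
  fun j => fderiv ℝ H z (Pi.single j 1)

open ContinuousLinearMap in
/-- `mixedHam d H i` is definitionally `H ∘ cyclicSelect i`. -/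
noncomputable def cyclicSelect {ι : Type*} [Sub ι] (i : ι) :
    (ι → ι → ℝ) →L[ℝ] (ι → ℝ) :=
  pi fun j => (proj j).comp (proj (R := ℝ) (φ := fun _ : ι => ι → ℝ) (j - i))

lemma sum_cyclicSelect_single {ι : Type*} [AddCommGroup ι] [Fintype ι] [DecidableEq ι]
    (k : ι) (w : ι → ℝ) : ∑ i, cyclicSelect i (Pi.single k w) = w := by
  funext j
  have hshift : ∀ i, j - i = k ↔ i = j - k := fun i => by
    rw [sub_eq_iff_eq_add, eq_sub_iff_add_eq', eq_comm]
  simp [cyclicSelect, Finset.sum_apply, Pi.single_apply, hshift, ite_apply]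

lemma constraintHam_nonneg (d : ℕ) (Z : Fin d → Fin d → ℝ) : 0 ≤ constraintHam d Z := by
  unfold constraintHam
  positivity

lemma constraintHam_const (d : ℕ) (z : Fin d → ℝ) : constraintHam d (fun _ => z) = 0 := by
  simp [constraintHam]

lemma differentiable_constraintHam (d : ℕ) : Differentiable ℝ (constraintHam d) := by
  unfold constraintHam
  refine Differentiable.fun_sum fun i _ => Differentiable.fun_sum fun j _ => ?_
  split_ifs <;> fun_prop

/-- The nonnegative function `constraintHam` vanishes on the diagonal, which thus consists of
minima. -/
lemma hasFDerivAt_constraintHam_const (d : ℕ) (z : Fin d → ℝ) :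
    HasFDerivAt (constraintHam d) (0 : (Fin d → Fin d → ℝ) →L[ℝ] ℝ) (fun _ => z) := by
  have hmin : IsLocalMin (constraintHam d) (fun _ => z) :=
    Filter.Eventually.of_forall fun Z => by
      rw [constraintHam_const]; exact constraintHam_nonneg d Z
  exact hmin.fderiv_eq_zero ▸ (differentiable_constraintHam d _).hasFDerivAt

lemma fderiv_augHam_const_single (d : ℕ) [NeZero d] (Ω : ℝ) {H : (Fin d → ℝ) → ℝ}
    {z : Fin d → ℝ} (hH : DifferentiableAt ℝ H z) (k : Fin d) (w : Fin d → ℝ) :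
    fderiv ℝ (augHam d Ω H) (fun _ => z) (Pi.single k w) = fderiv ℝ H z w := by
  have hmixed : ∀ i, HasFDerivAt (mixedHam d H i) ((fderiv ℝ H z).comp (cyclicSelect i))
      (fun _ => z) := fun i => hH.hasFDerivAt.comp (x := fun _ => z) (cyclicSelect i).hasFDerivAt
  have haug : HasFDerivAt (augHam d Ω H)
      (∑ i, (fderiv ℝ H z).comp (cyclicSelect i) + Ω • 0) (fun _ => z) :=
    (HasFDerivAt.fun_sum fun i _ => hmixed i).fun_add
      ((hasFDerivAt_constraintHam_const d z).const_mul Ω)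
  rw [haug.fderiv]
  simp [← map_sum, sum_cyclicSelect_single]

lemma eqOn_Icc_of_hasDerivWithinAt_of_lipschitzWith {E : Type*} [NormedAddCommGroup E]
    [NormedSpace ℝ E] {v : E → E} {K : NNReal} (hv : LipschitzWith K v) {f g : ℝ → E}
    {a b : ℝ} (hf : ∀ t ∈ Set.Icc a b, HasDerivWithinAt f (v (f t)) (Set.Icc a b) t)
    (hg : ∀ t ∈ Set.Icc a b, HasDerivWithinAt g (v (g t)) (Set.Icc a b) t) (ha : f a = g a) :
    Set.EqOn f g (Set.Icc a b) := by
  have hright : ∀ {u : ℝ → E},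
      (∀ t ∈ Set.Icc a b, HasDerivWithinAt u (v (u t)) (Set.Icc a b) t) →
      ∀ t ∈ Set.Ico a b, HasDerivWithinAt u (v (u t)) (Set.Ici t) t := fun hu t ht =>
    (hu t (Set.Ico_subset_Icc_self ht)).mono_of_mem_nhdsWithin (Icc_mem_nhdsGE_of_mem ht)
  exact ODE_solution_unique_of_mem_Icc_right (v := fun _ => v) (s := fun _ => Set.univ)
    (fun _ _ => hv.lipschitzOnWith) (HasDerivWithinAt.continuousOn hf) (hright hf)
    (fun _ _ => trivial) (HasDerivWithinAt.continuousOn hg) (hright hg) (fun _ _ => trivial) ha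

lemma extendedField_const {d : ℕ} [NeZero d] {Ω : ℝ} {H : (Fin d → ℝ) → ℝ}
    {Kinv : (Fin d → ℝ) → Matrix (Fin d) (Fin d) ℝ}
    {F : (Fin d → Fin d → ℝ) → (Fin d → Fin d → ℝ)}
    (hF : ∀ Z : Fin d → Fin d → ℝ, ∀ k : Fin d,
      F Z k = (Kinv (Z k)).mulVec
        (fun j => fderiv ℝ (augHam d Ω H) Z (Pi.single k (Pi.single j 1))))
    {z : Fin d → ℝ} (hH : DifferentiableAt ℝ H z) :
    F (fun _ => z) = fun _ => (Kinv z).mulVec (gradVec d H z) := by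
  funext k
  simp only [hF, fderiv_augHam_const_single d Ω hH]
  rfl

theorem extended_solution_eq_original_general
    (d : ℕ) [NeZero d] (Ω : ℝ) (T : ℝ)
    (H : (Fin d → ℝ) → ℝ) (hH : ContDiff ℝ 1 H)
    (Kinv : (Fin d → ℝ) → Matrix (Fin d) (Fin d) ℝ)
    (F : (Fin d → Fin d → ℝ) → (Fin d → Fin d → ℝ))
    (hF : ∀ Z : Fin d → Fin d → ℝ, ∀ k : Fin d,
      F Z k = (Kinv (Z k)).mulVec
        (fun j => fderiv ℝ (augHam d Ω H) Z (Pi.single k (Pi.single j 1))))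
    (hLip : ∃ L : NNReal, LipschitzWith L F)
    (P : ℝ → Fin d → ℝ) (P₀ : Fin d → ℝ)
    (hP : ∀ t ∈ Set.Icc 0 T, HasDerivWithinAt P
      ((Kinv (P t)).mulVec (gradVec d H (P t))) (Set.Icc 0 T) t)
    (hP0 : P 0 = P₀)
    (Ps : ℝ → Fin d → Fin d → ℝ)
    (hPs : ∀ t ∈ Set.Icc 0 T, HasDerivWithinAt Ps (F (Ps t)) (Set.Icc 0 T) t)
    (hPs0 : ∀ k : Fin d, Ps 0 k = P₀) :
    ∀ k : Fin d, ∀ t ∈ Set.Icc 0 T, Ps t k = P t := by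
  obtain ⟨L, hL⟩ := hLip
  have hdiag : ∀ t ∈ Set.Icc 0 T,
      HasDerivWithinAt (fun t _ => P t) (F fun _ => P t) (Set.Icc 0 T) t := fun t ht => by
    rw [extendedField_const hF (hH.differentiable one_ne_zero _), hasDerivWithinAt_pi]
    exact fun _ => hP t ht
  have hinit : Ps 0 = fun _ => P 0 := funext fun k => (hPs0 k).trans hP0.symm
  intro k t ht
  exact congrFun (eqOn_Icc_of_hasDerivWithinAt_of_lipschitzWith hL hPs hdiag hinit ht) k

/-- If the extended vector field F, F(P₁,…,P_d)_k = K⁻¹(P_k)·∇_{P_k}H̄(P₁,…,P_d), is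
Lipschitz, P solves the original system P' = K⁻¹(P)·∇H(P) on [0,T] with P(0) = P₀, and
(P₁,…,P_d) solves the extended system on [0,T] with P_k(0) = P₀ for every k, then
P_k(t) = P(t) for all k and all t ∈ [0,T]. -/
theorem extended_solution_eq_original
    (d : ℕ) [NeZero d] (Ω : ℝ) (T : ℝ) (hT : 0 ≤ T)
    (H : (Fin d → ℝ) → ℝ) (hH : ContDiff ℝ 1 H)
    (Kinv : (Fin d → ℝ) → Matrix (Fin d) (Fin d) ℝ) (hK : Continuous Kinv)
    (F : (Fin d → Fin d → ℝ) → (Fin d → Fin d → ℝ))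
    (hF : ∀ Z : Fin d → Fin d → ℝ, ∀ k : Fin d,
      F Z k = (Kinv (Z k)).mulVec
        (fun j => fderiv ℝ (augHam d Ω H) Z (Pi.single k (Pi.single j 1))))
    (hLip : ∃ L : NNReal, LipschitzWith L F)
    (P : ℝ → Fin d → ℝ) (P₀ : Fin d → ℝ)
    (hP : ∀ t ∈ Set.Icc 0 T, HasDerivWithinAt P
      ((Kinv (P t)).mulVec (gradVec d H (P t))) (Set.Icc 0 T) t)
    (hP0 : P 0 = P₀)
    (Ps : ℝ → Fin d → Fin d → ℝ)
    (hPs : ∀ t ∈ Set.Icc 0 T, HasDerivWithinAt Ps (F (Ps t)) (Set.Icc 0 T) t)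
    (hPs0 : ∀ k : Fin d, Ps 0 k = P₀) :
    ∀ k : Fin d, ∀ t ∈ Set.Icc 0 T, Ps t k = P t :=
  extended_solution_eq_original_general d Ω T H hH Kinv F hF hLip P P₀ hP hP0 Ps hPs hPs0
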